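/- Assume 𝕜 contains a primitive d-th root of unity ξ. Let A ∈ SetPar_n and 1 ≤ a ≤ n−1 with a ≁_A (a+1). Then in Y_{d,n}(q): (a) g_a² ē(A) = q ē(A); (b) g_a X_{a+1} ē(A) = X_a g_a ē(A); (c) g_a X_a ē(A) = X_{a+1} g_a ē(A). -/

import Mathlib

open scoped Classical

noncomputable section

namespace YH

/-- Generators of the Yokonuma–Hecke algebra (0-based indexing):
`g a h` corresponds to the generator `g_{a+1}` of the paper, and `t a` to `t_{a+1}`. -/
inductive Gen (n : ℕ) : Type
  | g : (a : ℕ) → a + 1 < n → Gen n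
  | t : Fin n → Gen n

variable (𝕜 : Type) [Field 𝕜] (d n : ℕ) (q : 𝕜)

/-- The free algebra on the generators. -/
abbrev F : Type := FreeAlgebra 𝕜 (Gen n)

def G (a : ℕ) (h : a + 1 < n) : F 𝕜 n := FreeAlgebra.ι 𝕜 (Gen.g a h)

def T (a : Fin n) : F 𝕜 n := FreeAlgebra.ι 𝕜 (Gen.t a)

/-- The simple transposition `σ_a = (a, a+1)` (0-based). -/
def sw (a : ℕ) (h : a + 1 < n) : Equiv.Perm (Fin n) :=
  Equiv.swap ⟨a, by omega⟩ ⟨a + 1, h⟩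

/-- The element `e_a = (1/d) Σ_{r=0}^{d-1} t_a^r t_{a+1}^{-r}` of the free algebra, where
`t_{a+1}^{-r}` is represented by `t_{a+1}^{(d-r) % d}` (they agree once `t^d = 1` is imposed). -/
def Efree (a : ℕ) (h : a + 1 < n) : F 𝕜 n :=
  (d : 𝕜)⁻¹ • ∑ r ∈ Finset.range d,
    T 𝕜 n ⟨a, by omega⟩ ^ r * T 𝕜 n ⟨a + 1, h⟩ ^ ((d - r) % d)

/-- The defining relations of the Yokonuma–Hecke algebra `Y_{d,n}(q)`. -/
inductive Rel : F 𝕜 n → F 𝕜 n → Prop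
  | torder (a : Fin n) : Rel (T 𝕜 n a ^ d) 1
  | tcomm (a b : Fin n) : Rel (T 𝕜 n a * T 𝕜 n b) (T 𝕜 n b * T 𝕜 n a)
  | tg (a : Fin n) (b : ℕ) (hb : b + 1 < n) :
      Rel (T 𝕜 n a * G 𝕜 n b hb) (G 𝕜 n b hb * T 𝕜 n (sw n b hb a))
  | quad (a : ℕ) (h : a + 1 < n) :
      Rel (G 𝕜 n a h ^ 2)
        (algebraMap 𝕜 (F 𝕜 n) q + (q - 1) • (Efree 𝕜 d n a h * G 𝕜 n a h))
  | braid (a : ℕ) (h : a + 2 < n) :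
      Rel (G 𝕜 n a (by omega) * G 𝕜 n (a + 1) h * G 𝕜 n a (by omega))
        (G 𝕜 n (a + 1) h * G 𝕜 n a (by omega) * G 𝕜 n (a + 1) h)
  | gcomm (a b : ℕ) (ha : a + 1 < n) (hb : b + 1 < n) (hab : a + 1 < b) :
      Rel (G 𝕜 n a ha * G 𝕜 n b hb) (G 𝕜 n b hb * G 𝕜 n a ha)

/-- The Yokonuma–Hecke algebra `Y_{d,n}(q)`. -/
abbrev Y : Type := RingQuot (Rel 𝕜 d n q)

def π : F 𝕜 n →ₐ[𝕜] Y 𝕜 d n q := RingQuot.mkAlgHom 𝕜 (Rel 𝕜 d n q)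

/-- The generator `g_{a+1}` of `Y_{d,n}(q)` (0-based: `g a h`). -/
def g (a : ℕ) (h : a + 1 < n) : Y 𝕜 d n q := π 𝕜 d n q (G 𝕜 n a h)

/-- The generator `t_{a+1}` of `Y_{d,n}(q)` (0-based: `t a`). -/
def t (a : Fin n) : Y 𝕜 d n q := π 𝕜 d n q (T 𝕜 n a)

/-- The idempotent `e_a` in `Y_{d,n}(q)`. -/
def eA (a : ℕ) (h : a + 1 < n) : Y 𝕜 d n q := π 𝕜 d n q (Efree 𝕜 d n a h)

/-- `(1/d) Σ_{r=0}^{d-1} t_a^r t_b^{-r}` in `Y_{d,n}(q)`, with `t_b^{-r}` written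
`t_b^{(d-r) % d}`. -/
def eabAux (a b : Fin n) : Y 𝕜 d n q :=
  (d : 𝕜)⁻¹ • ∑ r ∈ Finset.range d, t 𝕜 d n q a ^ r * t 𝕜 d n q b ^ ((d - r) % d)

/-- The element `e_{ab}` (symmetrized so that `e_{ba} = e_{ab}`). -/
def eab (a b : Fin n) : Y 𝕜 d n q :=
  if (a : ℕ) ≤ (b : ℕ) then eabAux 𝕜 d n q a b else eabAux 𝕜 d n q b a

/-- Set partitions of `{1, …, n}` are identified with equivalence relations, i.e. with
`Setoid (Fin n)`; `a ∼_A b` is `A.r a b`. -/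
abbrev SetPar (n : ℕ) := Setoid (Fin n)

/-- `e(A) = ∏_{a ∼_A b, a ≠ b} e_{ab}` (the factors commute, so the product may be
taken in any fixed order). -/
def eSet (A : Setoid (Fin n)) : Y 𝕜 d n q :=
  (((List.finRange n) ×ˢ (List.finRange n)).map
    (fun p => if A.r p.1 p.2 ∧ p.1 ≠ p.2 then eab 𝕜 d n q p.1 p.2 else 1)).prod

/-- `e(j) = ∏_{a=1}^n ((1/d) Σ_{r=0}^{d-1} ξ^{-j_a r} t_a^r)` for `j ∈ (ℤ/dℤ)^n`. -/
def ej (ξ : 𝕜) (j : Fin n → ZMod d) : Y 𝕜 d n q :=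
  ((List.finRange n).map (fun a =>
    (d : 𝕜)⁻¹ • ∑ r ∈ Finset.range d,
      ξ ^ (((-(j a)) * (r : ZMod d)).val) • t 𝕜 d n q a ^ r)).prod

/-- `J_A = { j ∈ (ℤ/dℤ)^n : j_a = j_b ⇔ a ∼_A b }`. -/
def JA [NeZero d] (A : Setoid (Fin n)) : Finset (Fin n → ZMod d) :=
  Finset.univ.filter (fun j => ∀ a b : Fin n, j a = j b ↔ A.r a b)

/-- `ē(A) = Σ_{j ∈ J_A} e(j)`. -/
def ebar [NeZero d] (ξ : 𝕜) (A : Setoid (Fin n)) : Y 𝕜 d n q :=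
  ∑ j ∈ JA d n A, ej 𝕜 d n q ξ j

/-- The Jucys–Murphy elements: `X 0 = X_1 = 1` and `X (a+1) = X_{a+2} = q⁻¹ g_{a+1} X_{a+1} g_{a+1}`
(0-based indexing: `X a h` is the paper's `X_{a+1}`). -/
def X : (a : ℕ) → a < n → Y 𝕜 d n q
  | 0, _ => 1
  | a + 1, h => q⁻¹ • (g 𝕜 d n q a h * X a (by omega) * g 𝕜 d n q a h)

/-- The action of a permutation on set partitions (equivalence relations). -/
def permSetoid (σ : Equiv.Perm (Fin n)) (A : Setoid (Fin n)) : Setoid (Fin n) where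
  r x y := A.r (σ.symm x) (σ.symm y)
  iseqv := ⟨fun _ => A.iseqv.refl _, fun h => A.iseqv.symm h, fun h h' => A.iseqv.trans h h'⟩

instance : Finite (Setoid (Fin n)) :=
  Finite.of_injective (fun A : Setoid (Fin n) => A.r)
    (fun A B h => by cases A; cases B; simp only at h; subst h; rfl)

noncomputable instance : Fintype (Setoid (Fin n)) := Fintype.ofFinite _

end YH


namespace YH

variable {𝕜 : Type} [Field 𝕜] {d n : ℕ} {q : 𝕜}

lemma t_pow_d (a : Fin n) : t 𝕜 d n q a ^ d = 1 := by
  have := RingQuot.mkAlgHom_rel 𝕜 (Rel.torder (𝕜 := 𝕜) (d := d) (n := n) (q := q) a)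
  simpa [t, π, map_pow] using this

lemma t_comm (a b : Fin n) : Commute (t 𝕜 d n q a) (t 𝕜 d n q b) := by
  have := RingQuot.mkAlgHom_rel 𝕜 (Rel.tcomm (𝕜 := 𝕜) (d := d) (n := n) (q := q) a b)
  simpa [t, π, map_mul, Commute, SemiconjBy] using this

lemma t_g (a : Fin n) (b : ℕ) (hb : b + 1 < n) :
    t 𝕜 d n q a * g 𝕜 d n q b hb = g 𝕜 d n q b hb * t 𝕜 d n q (sw n b hb a) := by
  have := RingQuot.mkAlgHom_rel 𝕜 (Rel.tg (𝕜 := 𝕜) (d := d) (q := q) a b hb)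
  simpa [t, g, π, map_mul] using this

lemma quadY (a : ℕ) (h : a + 1 < n) :
    g 𝕜 d n q a h ^ 2
      = algebraMap 𝕜 (Y 𝕜 d n q) q + (q - 1) • (eA 𝕜 d n q a h * g 𝕜 d n q a h) := by
  have := RingQuot.mkAlgHom_rel 𝕜 (Rel.quad (𝕜 := 𝕜) (d := d) (n := n) (q := q) a h)
  simpa [g, eA, π, map_pow, map_mul, map_add, map_smul, AlgHom.commutes] using this

lemma t_pow_mod (a : Fin n) (m : ℕ) : t 𝕜 d n q a ^ (m % d) = t 𝕜 d n q a ^ m := by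
  conv_rhs => rw [← Nat.div_add_mod m d]
  rw [pow_add, pow_mul, t_pow_d, one_pow, one_mul]

section chi
variable {ξ : 𝕜}

lemma chi_mod (hξ : IsPrimitiveRoot ξ d) (m : ℕ) : ξ ^ (m % d) = ξ ^ m := by
  conv_rhs => rw [← Nat.div_add_mod m d]
  rw [pow_add, pow_mul, hξ.pow_eq_one, one_pow, one_mul]

lemma chi_add [NeZero d] (hξ : IsPrimitiveRoot ξ d) (x y : ZMod d) :
    ξ ^ (x + y).val = ξ ^ x.val * ξ ^ y.val := by
  rw [ZMod.val_add, chi_mod hξ, pow_add]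

lemma chi_sum [NeZero d] (hξ : IsPrimitiveRoot ξ d) (c : ZMod d) :
    ∑ s : ZMod d, ξ ^ (c * s).val = if c = 0 then (d : 𝕜) else 0 := by
  split_ifs with hc
  · subst hc
    simp [ZMod.val_zero, Finset.card_univ, ZMod.card]
  · have key : ξ ^ c.val * ∑ s : ZMod d, ξ ^ (c * s).val = ∑ s : ZMod d, ξ ^ (c * s).val := by
      rw [Finset.mul_sum]
      refine Fintype.sum_equiv (Equiv.addLeft 1) _ _ (fun s => ?_)
      have h1 : c * ((Equiv.addLeft 1) s) = c + c * s := by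
        rw [Equiv.coe_addLeft]; ring
      rw [h1, chi_add hξ]
    have h1 : (ξ ^ c.val - 1) * ∑ s : ZMod d, ξ ^ (c * s).val = 0 := by
      rw [sub_mul, one_mul, key, sub_self]
    have h2 : ξ ^ c.val - 1 ≠ 0 := by
      rw [sub_ne_zero]
      exact hξ.pow_ne_one_of_pos_of_lt (ZMod.val_pos.2 hc).ne' (ZMod.val_lt c)
    exact (mul_eq_zero.1 h1).resolve_left h2

end chi

/-- `t a ^ s` for a mod-`d` exponent. -/
def tz (𝕜 : Type) [Field 𝕜] (d n : ℕ) (q : 𝕜) (a : Fin n) (s : ZMod d) : Y 𝕜 d n q :=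
  t 𝕜 d n q a ^ s.val

lemma tz_natCast (a : Fin n) (r : ℕ) :
    tz 𝕜 d n q a (r : ZMod d) = t 𝕜 d n q a ^ r := by
  rw [tz, ZMod.val_natCast, t_pow_mod]

lemma tz_add [NeZero d] (a : Fin n) (s s' : ZMod d) :
    tz 𝕜 d n q a (s + s') = tz 𝕜 d n q a s * tz 𝕜 d n q a s' := by
  rw [tz, tz, tz, ZMod.val_add, t_pow_mod, pow_add]

lemma tz_comm (a b : Fin n) (s s' : ZMod d) :
    Commute (tz 𝕜 d n q a s) (tz 𝕜 d n q b s') := (t_comm a b).pow_pow _ _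

/-- The factor `(1/d) ∑_s ξ^{-c s} t_a^s`. -/
def fac (𝕜 : Type) [Field 𝕜] (d n : ℕ) [NeZero d] (q ξ : 𝕜) (c : ZMod d) (a : Fin n) :
    Y 𝕜 d n q :=
  (d : 𝕜)⁻¹ • ∑ s : ZMod d, ξ ^ ((-c * s).val) • tz 𝕜 d n q a s

section facs
variable [NeZero d] {ξ : 𝕜}

lemma tz_fac_comm (c : ZMod d) (a b : Fin n) (s : ZMod d) :
    Commute (tz 𝕜 d n q a s) (fac 𝕜 d n q ξ c b) := by
  unfold fac
  exact (Commute.sum_right _ _ _ (fun s' _ => (tz_comm a b s s').smul_right _)).smul_right _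

lemma fac_comm (c c' : ZMod d) (a b : Fin n) :
    Commute (fac 𝕜 d n q ξ c a) (fac 𝕜 d n q ξ c' b) := by
  unfold fac
  exact ((Commute.sum_left _ _ _ (fun s _ =>
    ((Commute.sum_right _ _ _ (fun s' _ =>
      (tz_comm a b s s').smul_right _)).smul_right _).smul_left _)).smul_left _)

lemma tz_mul_fac (hξ : IsPrimitiveRoot ξ d) (c : ZMod d) (a : Fin n) (s : ZMod d) :
    tz 𝕜 d n q a s * fac 𝕜 d n q ξ c a = ξ ^ ((c * s).val) • fac 𝕜 d n q ξ c a := by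
  unfold fac
  rw [mul_smul_comm]
  rw [Finset.mul_sum]
  rw [smul_comm (ξ ^ ((c * s).val)) ((d : 𝕜)⁻¹)
      (∑ s : ZMod d, ξ ^ ((-c * s).val) • tz 𝕜 d n q a s)]
  rw [Finset.smul_sum]
  rw [Finset.smul_sum, Finset.smul_sum]
  refine Fintype.sum_equiv (Equiv.addLeft s) _ _ (fun s' => ?_)
  have harg : c * s + -c * (s + s') = -c * s' := by ring
  rw [mul_smul_comm, ← tz_add, Equiv.coe_addLeft]
  rw [smul_smul (ξ ^ ((c * s).val)), ← chi_add hξ, harg]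

end facs

variable {𝕜 : Type} [Field 𝕜] {d n : ℕ} {q : 𝕜}

section main
variable [NeZero d] {ξ : 𝕜}

lemma ej_eq_facs (ξ : 𝕜) (j : Fin n → ZMod d) :
    ej 𝕜 d n q ξ j = ((List.finRange n).map (fun a => fac 𝕜 d n q ξ (j a) a)).prod := by
  unfold ej
  congr 1
  refine List.map_congr_left (fun a _ => ?_)
  unfold fac
  congr 1
  refine Finset.sum_nbij' (fun r => ((r : ZMod d))) (fun s => s.val)
    (fun r _ => Finset.mem_univ _) (fun s _ => Finset.mem_range.2 (ZMod.val_lt s))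
    (fun r hr => by
      show ((r : ZMod d)).val = r
      rw [ZMod.val_natCast, Nat.mod_eq_of_lt (Finset.mem_range.1 hr)])
    (fun s _ => by show ((s.val : ℕ) : ZMod d) = s; exact ZMod.natCast_rightInverse s)
    (fun r _ => ?_)
  rw [tz_natCast]

lemma eabAux_eq (a b : Fin n) :
    eabAux 𝕜 d n q a b
      = (d : 𝕜)⁻¹ • ∑ s : ZMod d, tz 𝕜 d n q a s * tz 𝕜 d n q b (-s) := by
  unfold eabAux
  congr 1
  refine Finset.sum_nbij' (fun r => ((r : ZMod d))) (fun s => s.val)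
    (fun r _ => Finset.mem_univ _) (fun s _ => Finset.mem_range.2 (ZMod.val_lt s))
    (fun r hr => by
      show ((r : ZMod d)).val = r
      rw [ZMod.val_natCast, Nat.mod_eq_of_lt (Finset.mem_range.1 hr)])
    (fun s _ => by show ((s.val : ℕ) : ZMod d) = s; exact ZMod.natCast_rightInverse s)
    (fun r hr => ?_)
  have hr' := Finset.mem_range.1 hr
  rw [tz_natCast]
  congr 1
  have hneg : (-(r : ZMod d)) = ((d - r : ℕ) : ZMod d) := by
    rw [Nat.cast_sub hr'.le, ZMod.natCast_self, zero_sub]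
  rw [hneg, tz_natCast]
  exact t_pow_mod b (d - r)

lemma eA_eq (a : ℕ) (h : a + 1 < n) :
    eA 𝕜 d n q a h = eabAux 𝕜 d n q ⟨a, by omega⟩ ⟨a + 1, h⟩ := by
  unfold eA Efree eabAux
  simp only [map_smul, map_sum, map_mul, map_pow]
  rfl

lemma tz_mul_prodfac (hξ : IsPrimitiveRoot ξ d) (j : Fin n → ZMod d) (c : Fin n)
    (s : ZMod d) (l : List (Fin n)) (hl : c ∈ l) :
    tz 𝕜 d n q c s * (l.map (fun a => fac 𝕜 d n q ξ (j a) a)).prod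
      = ξ ^ ((j c * s).val) • (l.map (fun a => fac 𝕜 d n q ξ (j a) a)).prod := by
  induction l with
  | nil => simp at hl
  | cons b l ih =>
    rw [List.map_cons, List.prod_cons, ← mul_assoc]
    rcases eq_or_ne b c with rfl | hbc
    · rw [tz_mul_fac hξ, smul_mul_assoc]
    · have hcl : c ∈ l := by
        rcases List.mem_cons.1 hl with h' | h'
        · exact absurd h'.symm hbc
        · exact h'
      rw [(tz_fac_comm (j b) c b s).eq, mul_assoc, ih hcl, mul_smul_comm]

lemma tz_mul_ej (hξ : IsPrimitiveRoot ξ d) (j : Fin n → ZMod d) (c : Fin n) (s : ZMod d) :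
    tz 𝕜 d n q c s * ej 𝕜 d n q ξ j = ξ ^ ((j c * s).val) • ej 𝕜 d n q ξ j := by
  rw [ej_eq_facs]
  exact tz_mul_prodfac hξ j c s _ (List.mem_finRange c)

lemma eabAux_mul_ej (hξ : IsPrimitiveRoot ξ d) (hd : (d : 𝕜) ≠ 0) (a b : Fin n)
    (j : Fin n → ZMod d) :
    eabAux 𝕜 d n q a b * ej 𝕜 d n q ξ j
      = if j a = j b then ej 𝕜 d n q ξ j else 0 := by
  rw [eabAux_eq, smul_mul_assoc, Finset.sum_mul]
  have hterm : ∀ s : ZMod d, (tz 𝕜 d n q a s * tz 𝕜 d n q b (-s)) * ej 𝕜 d n q ξ j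
      = ξ ^ (((j a - j b) * s).val) • ej 𝕜 d n q ξ j := by
    intro s
    rw [mul_assoc, tz_mul_ej hξ, mul_smul_comm, tz_mul_ej hξ, smul_smul, ← chi_add hξ]
    congr 2
    ring
  rw [Finset.sum_congr rfl (fun s _ => hterm s), ← Finset.sum_smul, chi_sum hξ]
  rcases eq_or_ne (j a) (j b) with he | he
  · rw [if_pos (sub_eq_zero.2 he), if_pos he, smul_smul, inv_mul_cancel₀ hd, one_smul]
  · rw [if_neg (fun hc => he (sub_eq_zero.1 hc)), if_neg he, zero_smul, smul_zero]

end main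

variable {𝕜 : Type} [Field 𝕜] {d n : ℕ} {q : 𝕜}

lemma sw_sw (b : ℕ) (hb : b + 1 < n) (c : Fin n) :
    sw n b hb (sw n b hb c) = c := by
  simp [sw]

lemma g_t (b : ℕ) (hb : b + 1 < n) (c : Fin n) :
    g 𝕜 d n q b hb * t 𝕜 d n q c = t 𝕜 d n q (sw n b hb c) * g 𝕜 d n q b hb := by
  rw [t_g (sw n b hb c) b hb, sw_sw]

section main
variable [NeZero d] {ξ : 𝕜}

lemma g_tz (b : ℕ) (hb : b + 1 < n) (c : Fin n) (s : ZMod d) :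
    g 𝕜 d n q b hb * tz 𝕜 d n q c s = tz 𝕜 d n q (sw n b hb c) s * g 𝕜 d n q b hb := by
  have h : SemiconjBy (g 𝕜 d n q b hb) (t 𝕜 d n q c) (t 𝕜 d n q (sw n b hb c)) :=
    g_t b hb c
  exact h.pow_right s.val

lemma g_fac (b : ℕ) (hb : b + 1 < n) (c : ZMod d) (a : Fin n) :
    g 𝕜 d n q b hb * fac 𝕜 d n q ξ c a
      = fac 𝕜 d n q ξ c (sw n b hb a) * g 𝕜 d n q b hb := by
  unfold fac
  rw [mul_smul_comm, smul_mul_assoc]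
  congr 1
  rw [Finset.mul_sum, Finset.sum_mul]
  refine Finset.sum_congr rfl (fun s _ => ?_)
  rw [mul_smul_comm, smul_mul_assoc, g_tz]

lemma pairwise_commute_map (F : Fin n → Y 𝕜 d n q)
    (hF : ∀ x y, Commute (F x) (F y)) :
    ∀ l : List (Fin n), List.Pairwise Commute (l.map F)
  | [] => List.Pairwise.nil
  | (a :: l) => by
      rw [List.map_cons]
      refine List.Pairwise.cons ?_ (pairwise_commute_map F hF l)
      intro z hz
      rcases List.mem_map.1 hz with ⟨y, _, rfl⟩
      exact hF a y

lemma finRange_map_perm (σ : Equiv.Perm (Fin n)) :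
    ((List.finRange n).map σ).Perm (List.finRange n) := by
  apply List.perm_of_nodup_nodup_toFinset_eq
  · exact (List.nodup_finRange n).map σ.injective
  · exact List.nodup_finRange n
  · ext x
    simp only [List.mem_toFinset, List.mem_map, List.mem_finRange, true_and, iff_true]
    exact ⟨σ.symm x, by simp⟩

lemma g_ej (b : ℕ) (hb : b + 1 < n) (ξ : 𝕜) (j : Fin n → ZMod d) :
    g 𝕜 d n q b hb * ej 𝕜 d n q ξ j
      = ej 𝕜 d n q ξ (j ∘ (sw n b hb)) * g 𝕜 d n q b hb := by
  rw [ej_eq_facs, ej_eq_facs]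
  have step : ∀ l : List (Fin n),
      g 𝕜 d n q b hb * (l.map (fun a => fac 𝕜 d n q ξ (j a) a)).prod
        = (l.map (fun a => fac 𝕜 d n q ξ (j a) (sw n b hb a))).prod * g 𝕜 d n q b hb := by
    intro l
    induction l with
    | nil => simp
    | cons x l ih =>
      rw [List.map_cons, List.prod_cons, List.map_cons, List.prod_cons, ← mul_assoc,
        g_fac b hb, mul_assoc, ih, ← mul_assoc]
  rw [step]
  congr 1
  have hfun : (fun a => fac 𝕜 d n q ξ (j a) (sw n b hb a))
      = (fun a => fac 𝕜 d n q ξ ((j ∘ (sw n b hb)) a) a) ∘ (sw n b hb) := by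
    funext a
    simp only [Function.comp_apply, sw_sw]
  rw [hfun, ← List.map_map]
  refine List.Perm.prod_eq' ?_ ?_
  · exact (finRange_map_perm (sw n b hb)).map _
  · exact pairwise_commute_map _ (fun x y => fac_comm _ _ _ _) _

lemma comp_sw_sw (b : ℕ) (hb : b + 1 < n) (j : Fin n → ZMod d) :
    (j ∘ (sw n b hb)) ∘ (sw n b hb) = j := by
  funext x
  simp only [Function.comp_apply, sw_sw]

lemma mem_JA_comp (b : ℕ) (hb : b + 1 < n) (A : Setoid (Fin n)) (j : Fin n → ZMod d) :
    j ∘ (sw n b hb) ∈ JA d n (permSetoid n (sw n b hb) A) ↔ j ∈ JA d n A := by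
  simp only [JA, Finset.mem_filter, Finset.mem_univ, true_and]
  have hsymm : (sw n b hb).symm = sw n b hb := by
    simp [sw]
  constructor
  · intro H x y
    have := H (sw n b hb x) (sw n b hb y)
    simp only [Function.comp_apply, sw_sw] at this
    exact this.trans (by
      show A.r ((sw n b hb).symm (sw n b hb x)) ((sw n b hb).symm (sw n b hb y)) ↔ A.r x y
      rw [hsymm, sw_sw, sw_sw])
  · intro H x y
    have := H (sw n b hb x) (sw n b hb y)
    simp only [permSetoid, hsymm, Function.comp_apply]
    exact this

lemma g_ebar (b : ℕ) (hb : b + 1 < n) (ξ : 𝕜) (A : Setoid (Fin n)) :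
    g 𝕜 d n q b hb * ebar 𝕜 d n q ξ A
      = ebar 𝕜 d n q ξ (permSetoid n (sw n b hb) A) * g 𝕜 d n q b hb := by
  unfold ebar
  rw [Finset.mul_sum, Finset.sum_mul]
  refine Finset.sum_nbij' (fun j => j ∘ (sw n b hb)) (fun j => j ∘ (sw n b hb))
    (fun j hj => (mem_JA_comp b hb A j).2 hj)
    (fun j hj => ?_) (fun j _ => comp_sw_sw b hb j) (fun j _ => comp_sw_sw b hb j)
    (fun j _ => g_ej b hb ξ j)
  · have := mem_JA_comp b hb A (j ∘ (sw n b hb))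
    rw [comp_sw_sw] at this
    exact this.1 hj

end main

variable {𝕜 : Type} [Field 𝕜] {d n : ℕ} {q : 𝕜}

section main
variable [NeZero d] {ξ : 𝕜}

lemma X_mul_ej (ξ : 𝕜) : ∀ (b : ℕ) (hb : b < n) (j : Fin n → ZMod d),
    X 𝕜 d n q b hb * ej 𝕜 d n q ξ j = ej 𝕜 d n q ξ j * X 𝕜 d n q b hb
  | 0, hb, j => by simp [X]
  | (b + 1), hb, j => by
    have hXb := X_mul_ej ξ b (by omega) (j ∘ (sw n b hb))
    have hg := g_ej (q := q) b hb ξ j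
    have hg2 := g_ej (q := q) b hb ξ (j ∘ (sw n b hb))
    rw [comp_sw_sw] at hg2
    show (q⁻¹ • (g 𝕜 d n q b hb * X 𝕜 d n q b (by omega) * g 𝕜 d n q b hb))
        * ej 𝕜 d n q ξ j
      = ej 𝕜 d n q ξ j
        * (q⁻¹ • (g 𝕜 d n q b hb * X 𝕜 d n q b (by omega) * g 𝕜 d n q b hb))
    rw [smul_mul_assoc, mul_smul_comm]
    congr 1
    set G := g 𝕜 d n q b hb
    set Xb := X 𝕜 d n q b (by omega : b < n)
    set E := ej 𝕜 d n q ξ j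
    set E' := ej 𝕜 d n q ξ (j ∘ (sw n b hb))
    calc G * Xb * G * E = G * Xb * (G * E) := by rw [mul_assoc]
      _ = G * Xb * (E' * G) := by rw [hg]
      _ = G * (Xb * E') * G := by rw [← mul_assoc, mul_assoc G Xb E']
      _ = G * (E' * Xb) * G := by rw [hXb]
      _ = (G * E') * (Xb * G) := by rw [← mul_assoc G E' Xb, mul_assoc (G * E') Xb G]
      _ = (E * G) * (Xb * G) := by rw [hg2]
      _ = E * (G * Xb * G) := by rw [mul_assoc E G (Xb * G), ← mul_assoc G Xb G]

lemma X_mul_ebar (ξ : 𝕜) (b : ℕ) (hb : b < n) (A : Setoid (Fin n)) :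
    X 𝕜 d n q b hb * ebar 𝕜 d n q ξ A = ebar 𝕜 d n q ξ A * X 𝕜 d n q b hb := by
  unfold ebar
  rw [Finset.mul_sum, Finset.sum_mul]
  exact Finset.sum_congr rfl (fun j _ => X_mul_ej ξ b hb j)

lemma eA_mul_ebar_eq_zero (hξ : IsPrimitiveRoot ξ d) (hd : (d : 𝕜) ≠ 0)
    (a : ℕ) (h : a + 1 < n) (A : Setoid (Fin n))
    (hA : ¬ A.r ⟨a, by omega⟩ ⟨a + 1, h⟩) :
    eA 𝕜 d n q a h * ebar 𝕜 d n q ξ A = 0 := by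
  unfold ebar
  rw [Finset.mul_sum]
  refine Finset.sum_eq_zero (fun j hj => ?_)
  rw [eA_eq, eabAux_mul_ej hξ hd]
  have hj' : ∀ x y, j x = j y ↔ A.r x y := by
    simpa [JA, Finset.mem_filter] using hj
  exact if_neg (fun hc => hA ((hj' _ _).1 hc))

lemma permSetoid_not_rel (a : ℕ) (h : a + 1 < n) (A : Setoid (Fin n))
    (hA : ¬ A.r ⟨a, by omega⟩ ⟨a + 1, h⟩) :
    ¬ (permSetoid n (sw n a h) A).r ⟨a, by omega⟩ ⟨a + 1, h⟩ := by
  have hsymm : (sw n a h).symm = sw n a h := by simp [sw]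
  show ¬ A.r ((sw n a h).symm ⟨a, by omega⟩) ((sw n a h).symm ⟨a + 1, h⟩)
  rw [hsymm]
  have h1 : sw n a h ⟨a, by omega⟩ = ⟨a + 1, h⟩ := by
    simp [sw]
  have h2 : sw n a h ⟨a + 1, h⟩ = ⟨a, by omega⟩ := by
    simp [sw]
  rw [h1, h2]
  exact fun hr => hA (A.iseqv.symm hr)

lemma permSetoid_sw_sw (b : ℕ) (hb : b + 1 < n) (A : Setoid (Fin n)) :
    permSetoid n (sw n b hb) (permSetoid n (sw n b hb) A) = A := by
  have hsymm : (sw n b hb).symm = sw n b hb := by simp [sw]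
  refine Setoid.ext (fun x y => ?_)
  show A.r ((sw n b hb).symm ((sw n b hb).symm x)) ((sw n b hb).symm ((sw n b hb).symm y))
    ↔ A.r x y
  rw [hsymm, sw_sw, sw_sw]

lemma parta (hξ : IsPrimitiveRoot ξ d) (hd : (d : 𝕜) ≠ 0)
    (a : ℕ) (h : a + 1 < n) (A : Setoid (Fin n))
    (hA : ¬ A.r ⟨a, by omega⟩ ⟨a + 1, h⟩) :
    g 𝕜 d n q a h ^ 2 * ebar 𝕜 d n q ξ A = q • ebar 𝕜 d n q ξ A := by
  rw [quadY, add_mul, smul_mul_assoc, mul_assoc, g_ebar a h ξ A, ← mul_assoc,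
    eA_mul_ebar_eq_zero hξ hd a h _ (permSetoid_not_rel a h A hA), zero_mul, smul_zero,
    add_zero, ← Algebra.smul_def]

end main

end YH

namespace YH

lemma abstract_c {𝕜 R : Type} [Field 𝕜] [Ring R] [Algebra 𝕜 R] (q : 𝕜) (hq : q ≠ 0)
    (G Xa E : R) (pa2 : G * (G * E) = q • E) :
    G * Xa * E = (q⁻¹ • (G * Xa * G)) * G * E := by
  rw [smul_mul_assoc, smul_mul_assoc, mul_assoc (G * Xa * G) G E,
    mul_assoc (G * Xa) G (G * E), pa2, mul_smul_comm, inv_smul_smul₀ hq]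

lemma abstract_b {𝕜 R : Type} [Field 𝕜] [Ring R] [Algebra 𝕜 R] (q : 𝕜) (hq : q ≠ 0)
    (G Xa E E' : R) (pa2' : G * (G * E') = q • E')
    (hgE : G * E = E' * G) (hXE' : Xa * E' = E' * Xa) :
    G * (q⁻¹ • (G * Xa * G)) * E = Xa * G * E := by
  rw [mul_smul_comm, smul_mul_assoc]
  simp only [mul_assoc]
  rw [hgE, ← mul_assoc Xa E' G, hXE', mul_assoc E' Xa G, ← mul_assoc G E' (Xa * G),
    ← mul_assoc G (G * E') (Xa * G), pa2', smul_mul_assoc, inv_smul_smul₀ hq]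


end YH

open YH in
/-- if `𝕜` contains a primitive `d`-th root of unity `ξ`, `A ∈ SetPar_n` and
`a ≁_A (a+1)`, then in `Y_{d,n}(q)` (0-based indices):
(a) `g_a² ē(A) = q ē(A)`;
(b) `g_a X_{a+1} ē(A) = X_a g_a ē(A)`;
(c) `g_a X_a ē(A) = X_{a+1} g_a ē(A)`. -/
theorem statement9 (𝕜 : Type) [Field 𝕜] (d n : ℕ) [NeZero d] (hn : 0 < n)
    (hdk : (d : 𝕜) ≠ 0) (q : 𝕜) (hq0 : q ≠ 0) (hq1 : q ≠ 1)
    (ξ : 𝕜) (hξ : IsPrimitiveRoot ξ d)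
    (A : Setoid (Fin n)) (a : ℕ) (h : a + 1 < n)
    (hA : ¬ A.r ⟨a, by omega⟩ ⟨a + 1, h⟩) :
    (g 𝕜 d n q a h ^ 2 * ebar 𝕜 d n q ξ A = q • ebar 𝕜 d n q ξ A)
    ∧ (g 𝕜 d n q a h * X 𝕜 d n q (a + 1) h * ebar 𝕜 d n q ξ A
      = X 𝕜 d n q a (by omega) * g 𝕜 d n q a h * ebar 𝕜 d n q ξ A)
    ∧ (g 𝕜 d n q a h * X 𝕜 d n q a (by omega) * ebar 𝕜 d n q ξ A
      = X 𝕜 d n q (a + 1) h * g 𝕜 d n q a h * ebar 𝕜 d n q ξ A) := by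
  have hA'r : ¬ (permSetoid n (sw n a h) A).r ⟨a, by omega⟩ ⟨a + 1, h⟩ :=
    permSetoid_not_rel a h A hA
  have pa2 : g 𝕜 d n q a h * (g 𝕜 d n q a h * ebar 𝕜 d n q ξ A)
      = q • ebar 𝕜 d n q ξ A := by
    rw [← mul_assoc, ← pow_two]
    exact parta hξ hdk a h A hA
  have pa2' : g 𝕜 d n q a h
        * (g 𝕜 d n q a h * ebar 𝕜 d n q ξ (permSetoid n (sw n a h) A))
      = q • ebar 𝕜 d n q ξ (permSetoid n (sw n a h) A) := by
    rw [← mul_assoc, ← pow_two]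
    exact parta hξ hdk a h _ hA'r
  have hXdef : X 𝕜 d n q (a + 1) h
      = q⁻¹ • (g 𝕜 d n q a h * X 𝕜 d n q a (by omega) * g 𝕜 d n q a h) := rfl
  refine ⟨parta hξ hdk a h A hA, ?_, ?_⟩
  · rw [hXdef]
    exact abstract_b q hq0 _ _ _ _ pa2' (g_ebar a h ξ A)
      (X_mul_ebar ξ a (by omega) (permSetoid n (sw n a h) A))
  · rw [hXdef]
    exact abstract_c q hq0 _ _ _ pa2

end
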